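/- For any set S of 2n+1 points in general position in the plane, the number of halving circles of S is congruent to n modulo 2. -/

import Mathlib

open scoped Classical

noncomputable section

abbrev Pt : Type := EuclideanSpace ℝ (Fin 2)

/-- `p` lies on the circle with center `c` and radius `r`. -/
def onC (c : Pt) (r : ℝ) (p : Pt) : Prop := dist p c = r

/-- `p` lies strictly inside the circle with center `c` and radius `r`. -/
def insideC (c : Pt) (r : ℝ) (p : Pt) : Prop := dist p c < r

/-- `p` lies strictly outside the circle with center `c` and radius `r`. -/
def outsideC (c : Pt) (r : ℝ) (p : Pt) : Prop := r < dist p c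

/-- Four points lie on a common circle. -/
def Concyclic4 (p q u v : Pt) : Prop :=
  ∃ c r, 0 < r ∧ onC c r p ∧ onC c r q ∧ onC c r u ∧ onC c r v

/-- No three points of `S` collinear, no four concyclic. -/
def GenPos (S : Finset Pt) : Prop :=
  (∀ p ∈ S, ∀ q ∈ S, ∀ u ∈ S, p ≠ q → p ≠ u → q ≠ u →
      ¬ Collinear ℝ ({p, q, u} : Set Pt)) ∧
  (∀ p ∈ S, ∀ q ∈ S, ∀ u ∈ S, ∀ v ∈ S,
      p ≠ q → p ≠ u → p ≠ v → q ≠ u → q ≠ v → u ≠ v → ¬ Concyclic4 p q u v)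

/-- The circle `(c, r)` is halving for `S` (with `|S| = 2n+1`). -/
def IsHalving (n : ℕ) (S : Finset Pt) (c : Pt) (r : ℝ) : Prop :=
  0 < r ∧ (S.filter (onC c r)).card = 3 ∧
  (S.filter (insideC c r)).card = n - 1 ∧ (S.filter (outsideC c r)).card = n - 1

/-- The set of halving circles of `S`, encoded as center–radius pairs. -/
def halvingSet (n : ℕ) (S : Finset Pt) : Set (Pt × ℝ) :=
  {cr | IsHalving n S cr.1 cr.2}

/-- Signed area / cross-product test for which side of line `AB` the point `P` is on. -/
def sideVal (A B P : Pt) : ℝ :=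
  (B 0 - A 0) * (P 1 - A 1) - (B 1 - A 1) * (P 0 - A 0)

/-- squared distance -/
def dsq (c p : Pt) : ℝ := (p 0 - c 0)^2 + (p 1 - c 1)^2

lemma dist_sq (p c : Pt) : dist p c ^ 2 = dsq c p := by
  rw [EuclideanSpace.dist_eq, Real.sq_sqrt (by positivity)]
  simp [Fin.sum_univ_two, Real.dist_eq, sq_abs, dsq]

lemma dsq_nonneg (c p : Pt) : 0 ≤ dsq c p := by rw [← dist_sq]; positivity

lemma onC_iff {c p : Pt} {r : ℝ} (hr : 0 < r) : onC c r p ↔ dsq c p = r ^ 2 := by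
  rw [← dist_sq, onC]
  constructor
  · rintro rfl; rfl
  · intro h
    have := dist_nonneg (x := p) (y := c)
    nlinarith [sq_nonneg (dist p c - r), sq_nonneg (dist p c + r)]

lemma insideC_iff {c p : Pt} {r : ℝ} (hr : 0 < r) : insideC c r p ↔ dsq c p < r ^ 2 := by
  rw [← dist_sq, insideC]
  have := dist_nonneg (x := p) (y := c)
  constructor
  · intro h; nlinarith
  · intro h; nlinarith [sq_nonneg (dist p c - r), sq_nonneg (dist p c + r)]

lemma outsideC_iff {c p : Pt} {r : ℝ} (hr : 0 < r) : outsideC c r p ↔ r ^ 2 < dsq c p := by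
  rw [← dist_sq, outsideC]
  have := dist_nonneg (x := p) (y := c)
  constructor
  · intro h; nlinarith
  · intro h; nlinarith [sq_nonneg (dist p c - r), sq_nonneg (dist p c + r)]

lemma pt_ext {p q : Pt} (h0 : p 0 = q 0) (h1 : p 1 = q 1) : p = q := by
  apply PiLp.ext
  intro i
  fin_cases i <;> assumption

lemma dsq_eq_zero {c p : Pt} (h : dsq c p = 0) : p = c := by
  rw [dsq] at h
  have h0 : p 0 - c 0 = 0 := by nlinarith [sq_nonneg (p 0 - c 0), sq_nonneg (p 1 - c 1)]
  have h1 : p 1 - c 1 = 0 := by nlinarith [sq_nonneg (p 0 - c 0), sq_nonneg (p 1 - c 1)]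
  exact pt_ext (by linarith) (by linarith)

lemma collinear_iff_sideVal {p q u : Pt} (hpq : p ≠ q) :
    Collinear ℝ ({p, q, u} : Set Pt) ↔ sideVal p q u = 0 := by
  rw [collinear_iff_of_mem (show p ∈ ({p, q, u} : Set Pt) by simp)]
  constructor
  · rintro ⟨v, hv⟩
    obtain ⟨a, ha⟩ := hv q (by simp)
    obtain ⟨b, hb⟩ := hv u (by simp)
    have ha0 : q 0 = a * v 0 + p 0 := by rw [ha]; rfl
    have ha1 : q 1 = a * v 1 + p 1 := by rw [ha]; rfl
    have hb0 : u 0 = b * v 0 + p 0 := by rw [hb]; rfl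
    have hb1 : u 1 = b * v 1 + p 1 := by rw [hb]; rfl
    simp only [sideVal, ha0, ha1, hb0, hb1]; ring
  · intro hs
    refine ⟨q - p, ?_⟩
    intro x hx
    simp only [Set.mem_insert_iff, Set.mem_singleton_iff] at hx
    have key : ∀ k : ℝ, x 0 = k * (q 0 - p 0) + p 0 → x 1 = k * (q 1 - p 1) + p 1 →
        ∃ r : ℝ, x = r • (q - p) +ᵥ p := by
      intro k h0 h1
      refine ⟨k, ?_⟩
      apply pt_ext
      · show x 0 = k * ((q - p) 0) + p 0
        simpa using h0
      · show x 1 = k * ((q - p) 1) + p 1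
        simpa using h1
    rcases hx with rfl | rfl | rfl
    · exact key 0 (by ring) (by ring)
    · exact key 1 (by ring) (by ring)
    · -- use sideVal = 0
      have hne : q 0 - p 0 ≠ 0 ∨ q 1 - p 1 ≠ 0 := by
        by_contra hc
        push_neg at hc
        exact hpq (pt_ext (by linarith [hc.1]) (by linarith [hc.2]))
      simp only [sideVal] at hs
      rcases hne with h | h
      · exact key ((x 0 - p 0) / (q 0 - p 0)) (by field_simp; ring) (by field_simp; nlinarith [hs])
      · exact key ((x 1 - p 1) / (q 1 - p 1)) (by field_simp; nlinarith [hs]) (by field_simp; ring)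

/-! ### The pencil of circles through two points -/

def mkPt (a b : ℝ) : Pt := WithLp.toLp 2 ![a, b]

@[simp] lemma mkPt_zero (a b : ℝ) : mkPt a b 0 = a := rfl
@[simp] lemma mkPt_one (a b : ℝ) : mkPt a b 1 = b := rfl

/-- Center of the circle through `p, q` with pencil parameter `τ`. -/
def cen (p q : Pt) (τ : ℝ) : Pt :=
  mkPt ((p 0 + q 0) / 2 - τ * (q 1 - p 1)) ((p 1 + q 1) / 2 + τ * (q 0 - p 0))

def radp (p q : Pt) (τ : ℝ) : ℝ := Real.sqrt (dsq (cen p q τ) p)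

def Aval (p q s : Pt) : ℝ := dsq (cen p q 0) s - dsq (cen p q 0) p

def alphaVal (p q s : Pt) : ℝ := 2 * sideVal p q s

def tval (p q s : Pt) : ℝ := Aval p q s / alphaVal p q s

lemma gval_eq (p q s : Pt) (τ : ℝ) :
    dsq (cen p q τ) s - dsq (cen p q τ) p = Aval p q s - τ * alphaVal p q s := by
  simp only [dsq, Aval, alphaVal, sideVal, cen, mkPt_zero, mkPt_one]
  ring

lemma dsq_cen_q (p q : Pt) (τ : ℝ) : dsq (cen p q τ) q = dsq (cen p q τ) p := by
  simp only [dsq, cen, mkPt_zero, mkPt_one]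
  ring

lemma dsq_cen_pos {p q : Pt} (hpq : p ≠ q) (τ : ℝ) : 0 < dsq (cen p q τ) p := by
  rcases lt_or_eq_of_le (dsq_nonneg (cen p q τ) p) with h | h
  · exact h
  · exfalso
    have hp : p = cen p q τ := dsq_eq_zero h.symm
    have hq : q = cen p q τ := dsq_eq_zero (by rw [dsq_cen_q, ← h])
    exact hpq (hp.trans hq.symm)

lemma radp_pos {p q : Pt} (hpq : p ≠ q) (τ : ℝ) : 0 < radp p q τ :=
  Real.sqrt_pos.mpr (dsq_cen_pos hpq τ)

lemma radp_sq {p q : Pt} (hpq : p ≠ q) (τ : ℝ) : radp p q τ ^ 2 = dsq (cen p q τ) p := by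
  rw [radp, Real.sq_sqrt (le_of_lt (dsq_cen_pos hpq τ))]

lemma onC_cen_p {p q : Pt} (hpq : p ≠ q) (τ : ℝ) : onC (cen p q τ) (radp p q τ) p := by
  rw [onC_iff (radp_pos hpq τ), radp_sq hpq]

lemma onC_cen_q {p q : Pt} (hpq : p ≠ q) (τ : ℝ) : onC (cen p q τ) (radp p q τ) q := by
  rw [onC_iff (radp_pos hpq τ), radp_sq hpq, dsq_cen_q]

lemma onC_cen_iff {p q s : Pt} (hpq : p ≠ q) (τ : ℝ) :
    onC (cen p q τ) (radp p q τ) s ↔ Aval p q s - τ * alphaVal p q s = 0 := by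
  rw [onC_iff (radp_pos hpq τ), radp_sq hpq, ← gval_eq p q s τ]
  constructor <;> intro h <;> linarith

lemma insideC_cen_iff {p q s : Pt} (hpq : p ≠ q) (τ : ℝ) :
    insideC (cen p q τ) (radp p q τ) s ↔ Aval p q s - τ * alphaVal p q s < 0 := by
  rw [insideC_iff (radp_pos hpq τ), radp_sq hpq]
  have := gval_eq p q s τ
  constructor <;> intro h <;> linarith

lemma outsideC_cen_iff {p q s : Pt} (hpq : p ≠ q) (τ : ℝ) :
    outsideC (cen p q τ) (radp p q τ) s ↔ 0 < Aval p q s - τ * alphaVal p q s := by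
  rw [outsideC_iff (radp_pos hpq τ), radp_sq hpq]
  have := gval_eq p q s τ
  constructor <;> intro h <;> linarith

lemma Aval_eq_tval_mul {p q s : Pt} (hα : alphaVal p q s ≠ 0) :
    Aval p q s = tval p q s * alphaVal p q s := by
  rw [tval, div_mul_cancel₀ _ hα]

/-- On the circle with parameter `τ` iff `τ = tval`. -/
lemma onC_cen_iff_tval {p q s : Pt} (hpq : p ≠ q) (hα : alphaVal p q s ≠ 0) (τ : ℝ) :
    onC (cen p q τ) (radp p q τ) s ↔ τ = tval p q s := by
  rw [onC_cen_iff hpq, Aval_eq_tval_mul hα]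
  constructor
  · intro h
    have h2 : (tval p q s - τ) * alphaVal p q s = 0 := by linarith
    rcases mul_eq_zero.mp h2 with h3 | h3
    · linarith
    · exact absurd h3 hα
  · intro h
    rw [h]
    ring

lemma insideC_cen_iff_tval {p q s : Pt} (hpq : p ≠ q) (hα : alphaVal p q s ≠ 0) (τ : ℝ) :
    insideC (cen p q τ) (radp p q τ) s ↔
      ((0 < alphaVal p q s ∧ tval p q s < τ) ∨ (¬ (0 < alphaVal p q s) ∧ τ < tval p q s)) := by
  rw [insideC_cen_iff hpq, Aval_eq_tval_mul hα]
  have hh : tval p q s * alphaVal p q s - τ * alphaVal p q s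
      = alphaVal p q s * (tval p q s - τ) := by ring
  rw [hh]
  rcases lt_or_gt_of_ne hα with hneg | hpos
  · constructor
    · intro h
      right
      refine ⟨by linarith, ?_⟩
      nlinarith
    · rintro (⟨h1, _⟩ | ⟨_, h2⟩)
      · linarith
      · nlinarith
  · constructor
    · intro h
      left
      refine ⟨hpos, ?_⟩
      nlinarith
    · rintro (⟨_, h2⟩ | ⟨h1, _⟩)
      · nlinarith
      · linarith

lemma outsideC_cen_iff_tval {p q s : Pt} (hpq : p ≠ q) (hα : alphaVal p q s ≠ 0) (τ : ℝ) :
    outsideC (cen p q τ) (radp p q τ) s ↔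
      ((0 < alphaVal p q s ∧ τ < tval p q s) ∨ (¬ (0 < alphaVal p q s) ∧ tval p q s < τ)) := by
  rw [outsideC_cen_iff hpq, Aval_eq_tval_mul hα]
  have hh : tval p q s * alphaVal p q s - τ * alphaVal p q s
      = alphaVal p q s * (tval p q s - τ) := by ring
  rw [hh]
  rcases lt_or_gt_of_ne hα with hneg | hpos
  · constructor
    · intro h
      right
      refine ⟨by linarith, ?_⟩
      nlinarith
    · rintro (⟨h1, _⟩ | ⟨_, h2⟩)
      · linarith
      · nlinarith
  · constructor
    · intro h
      left
      refine ⟨hpos, ?_⟩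
      nlinarith
    · rintro (⟨_, h2⟩ | ⟨h1, _⟩)
      · nlinarith
      · linarith

/-- Any circle through `p` and `q` belongs to the pencil. -/
lemma circle_mem_pencil {p q : Pt} (hpq : p ≠ q) {c : Pt} {r : ℝ} (hr : 0 < r)
    (hp : onC c r p) (hq : onC c r q) : ∃ τ, c = cen p q τ ∧ r = radp p q τ := by
  have hdp : dsq c p = r ^ 2 := (onC_iff hr).mp hp
  have hdq : dsq c q = r ^ 2 := (onC_iff hr).mp hq
  have hD : (q 0 - p 0) ^ 2 + (q 1 - p 1) ^ 2 ≠ 0 := by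
    intro h
    have h0 : q 0 - p 0 = 0 := by nlinarith [sq_nonneg (q 0 - p 0), sq_nonneg (q 1 - p 1)]
    have h1 : q 1 - p 1 = 0 := by nlinarith [sq_nonneg (q 0 - p 0), sq_nonneg (q 1 - p 1)]
    exact hpq (pt_ext (by linarith) (by linarith))
  -- the linear relation: c is on the perpendicular bisector of pq
  have hE : (q 0 - p 0) * (c 0 - (p 0 + q 0)/2) + (q 1 - p 1) * (c 1 - (p 1 + q 1)/2) = 0 := by
    have h := hdp.trans hdq.symm
    simp only [dsq] at h
    linear_combination ((1:ℝ)/2) * h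
  set τ := ((c 1 - (p 1 + q 1)/2) * (q 0 - p 0) - (c 0 - (p 0 + q 0)/2) * (q 1 - p 1))
      / ((q 0 - p 0) ^ 2 + (q 1 - p 1) ^ 2) with hτ
  have hτD : τ * ((q 0 - p 0) ^ 2 + (q 1 - p 1) ^ 2)
      = (c 1 - (p 1 + q 1)/2) * (q 0 - p 0) - (c 0 - (p 0 + q 0)/2) * (q 1 - p 1) := by
    rw [hτ, div_mul_cancel₀ _ hD]
  have hc0 : c 0 = (p 0 + q 0)/2 - τ * (q 1 - p 1) := by
    have h3 : (c 0 - ((p 0 + q 0)/2 - τ * (q 1 - p 1))) * ((q 0 - p 0) ^ 2 + (q 1 - p 1) ^ 2)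
        = 0 := by
      linear_combination (q 0 - p 0) * hE + (q 1 - p 1) * hτD
    rcases mul_eq_zero.mp h3 with h4 | h4
    · linarith [sub_eq_zero.mp h4]
    · exact absurd h4 hD
  have hc1 : c 1 = (p 1 + q 1)/2 + τ * (q 0 - p 0) := by
    have h3 : (c 1 - ((p 1 + q 1)/2 + τ * (q 0 - p 0))) * ((q 0 - p 0) ^ 2 + (q 1 - p 1) ^ 2)
        = 0 := by
      linear_combination (q 1 - p 1) * hE - (q 0 - p 0) * hτD
    rcases mul_eq_zero.mp h3 with h4 | h4
    · linarith [sub_eq_zero.mp h4]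
    · exact absurd h4 hD
  have hcen : c = cen p q τ := pt_ext (by rw [hc0]; rfl) (by rw [hc1]; rfl)
  refine ⟨τ, hcen, ?_⟩
  have h1 : r ^ 2 = radp p q τ ^ 2 := by
    rw [radp_sq hpq, ← hcen, hdp]
  have h2 := radp_pos hpq τ
  calc r = Real.sqrt (r ^ 2) := (Real.sqrt_sq hr.le).symm
    _ = Real.sqrt (radp p q τ ^ 2) := by rw [h1]
    _ = radp p q τ := Real.sqrt_sq h2.le
def cnt (R : Finset Pt) (t : Pt → ℝ) (pos : Pt → Prop) (r : Pt) : ℕ :=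
  (R.filter (fun s => (pos s ∧ t s < t r) ∨ (¬ pos s ∧ t r < t s))).card

lemma cross_lemma (R : Finset Pt) :
    ∀ (t : Pt → ℝ), Set.InjOn t R → ∀ (pos : Pt → Prop) (m : ℕ),
    (R.filter (fun r => cnt R t pos r = m)).card % 2
      = ((if (R.filter (fun s => ¬ pos s)).card ≤ m then 1 else 0)
          + (if (R.filter (fun s => pos s)).card ≤ m then 1 else 0)) % 2 := by
  induction R using Finset.strongInductionOn with
  | _ R IH =>
  intro t ht pos m
  rcases R.eq_empty_or_nonempty with rfl | hne
  · simp
  obtain ⟨a, haR, hamin⟩ := R.exists_min_image t hne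
  set R' := R.erase a with hR'
  have hsub : R' ⊂ R := Finset.erase_ssubset haR
  have hanotin : a ∉ R' := Finset.notMem_erase a R
  have ht' : Set.InjOn t R' := ht.mono (by exact_mod_cast Finset.erase_subset a R)
  have htlt : ∀ s ∈ R', t a < t s := by
    intro s hs
    have hsR : s ∈ R := Finset.mem_of_mem_erase hs
    have hne' : s ≠ a := Finset.ne_of_mem_erase hs
    rcases lt_or_eq_of_le (hamin s hsR) with h | h
    · exact h
    · exact absurd (ht hsR haR h.symm) hne'
  have key : ∀ (Q : Pt → Prop) [DecidablePred Q],
      (R.filter Q).card = (R'.filter Q).card + (if Q a then 1 else 0) := by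
    intro Q _
    rw [hR', Finset.filter_erase]
    by_cases hQ : Q a
    · rw [if_pos hQ, Finset.card_erase_of_mem (Finset.mem_filter.mpr ⟨haR, hQ⟩)]
      have : 0 < (R.filter Q).card := Finset.card_pos.mpr ⟨a, Finset.mem_filter.mpr ⟨haR, hQ⟩⟩
      omega
    · rw [if_neg hQ, Finset.erase_eq_of_notMem (fun h => hQ ((Finset.mem_filter.mp h).2)),
        Nat.add_zero]
  -- count for the minimal element
  have hcnta : cnt R t pos a = (R'.filter (fun s => ¬ pos s)).card := by
    unfold cnt
    congr 1
    ext s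
    simp only [Finset.mem_filter, hR', Finset.mem_erase]
    constructor
    · rintro ⟨hsR, h | h⟩
      · exact absurd (hamin s hsR) (not_le.mpr h.2)
      · exact ⟨⟨fun he => (by subst he; exact lt_irrefl _ h.2), hsR⟩, h.1⟩
    · rintro ⟨⟨hne', hsR⟩, hpos⟩
      exact ⟨hsR, Or.inr ⟨hpos, htlt s (Finset.mem_erase.mpr ⟨hne', hsR⟩)⟩⟩
  -- count for other elements
  have hcnt' : ∀ r ∈ R', cnt R t pos r = cnt R' t pos r + (if pos a then 1 else 0) := by
    intro r hr
    have h := key (fun s => (pos s ∧ t s < t r) ∨ (¬ pos s ∧ t r < t s))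
    have hcond : ((pos a ∧ t a < t r) ∨ (¬ pos a ∧ t r < t a)) ↔ pos a := by
      have h1 : t a < t r := htlt r hr
      constructor
      · rintro (h | h)
        · exact h.1
        · exact absurd h.2 (not_lt.mpr (le_of_lt h1))
      · intro h; exact Or.inl ⟨h, h1⟩
    unfold cnt
    rw [h]
    congr 1
    by_cases hpa : pos a
    · rw [if_pos (hcond.mpr hpa), if_pos hpa]
    · rw [if_neg (fun hc => hpa (hcond.mp hc)), if_neg hpa]
  -- split the outer filter
  have houter : (R.filter (fun r => cnt R t pos r = m)).card
      = (R'.filter (fun r => cnt R' t pos r + (if pos a then 1 else 0) = m)).card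
        + (if (R'.filter (fun s => ¬ pos s)).card = m then 1 else 0) := by
    have h := key (fun r => cnt R t pos r = m)
    rw [h, hcnta]
    congr 1
    have hfc : R'.filter (fun r => cnt R t pos r = m)
        = R'.filter (fun r => cnt R' t pos r + (if pos a then 1 else 0) = m) := by
      apply Finset.filter_congr
      intro r hr
      rw [hcnt' r hr]
    rw [hfc]
  have hlo := key (fun s => ¬ pos s)
  have hhi := key (fun s => pos s)
  set L := (R'.filter (fun s => ¬ pos s)).card with hL
  set Hi := (R'.filter (fun s => pos s)).card with hHi
  by_cases hpa : pos a
  · simp only [if_pos hpa, if_neg (not_not_intro hpa), Nat.add_zero] at houter hlo hhi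
    rcases Nat.eq_zero_or_pos m with rfl | hm
    · have hz : (R'.filter (fun r => cnt R' t pos r + 1 = 0)).card = 0 := by
        rw [Finset.card_eq_zero]
        apply Finset.filter_false_of_mem
        intro r _
        omega
      rw [houter, hz, hlo, hhi]
      split_ifs <;> omega
    · have hfc2 : R'.filter (fun r => cnt R' t pos r + 1 = m)
          = R'.filter (fun r => cnt R' t pos r = m - 1) := by
        apply Finset.filter_congr
        intro r _
        omega
      rw [houter, hfc2, hlo, hhi]
      have hIH := IH R' hsub t ht' pos (m - 1)
      rw [← hL, ← hHi] at hIH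
      split_ifs at hIH ⊢ <;> omega
  · simp only [if_neg hpa, if_pos hpa, Nat.add_zero] at houter hlo hhi
    rw [houter, hlo, hhi]
    have hIH := IH R' hsub t ht' pos m
    rw [← hL, ← hHi] at hIH
    split_ifs at hIH ⊢ <;> omega

lemma odd_cnt (R : Finset Pt) (t : Pt → ℝ) (ht : Set.InjOn t R) (pos : Pt → Prop)
    (n : ℕ) (hn : 1 ≤ n) (hcard : R.card = 2 * n - 1) :
    (R.filter (fun r => cnt R t pos r = n - 1)).card % 2 = 1 := by
  rw [cross_lemma R t ht pos (n-1)]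
  have hsplit : (R.filter (fun s => ¬ pos s)).card + (R.filter (fun s => pos s)).card
      = 2 * n - 1 := by
    rw [← hcard, add_comm, Finset.card_filter_add_card_filter_not]
  split_ifs <;> omega
/-- Uniqueness of the circle through three non-collinear points. -/
lemma circle_unique {p q u : Pt} (hside : sideVal p q u ≠ 0) {c c' : Pt} {r r' : ℝ}
    (hr : 0 < r) (hr' : 0 < r')
    (hp : onC c r p) (hq : onC c r q) (hu : onC c r u)
    (hp' : onC c' r' p) (hq' : onC c' r' q) (hu' : onC c' r' u) : c = c' ∧ r = r' := by
  have h1 := (onC_iff hr).mp hp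
  have h2 := (onC_iff hr).mp hq
  have h3 := (onC_iff hr).mp hu
  have h4 := (onC_iff hr').mp hp'
  have h5 := (onC_iff hr').mp hq'
  have h6 := (onC_iff hr').mp hu'
  simp only [dsq] at h1 h2 h3 h4 h5 h6
  have hE1 : (q 0 - p 0) * (c 0 - c' 0) + (q 1 - p 1) * (c 1 - c' 1) = 0 := by
    linear_combination ((1:ℝ)/2) * h1 - ((1:ℝ)/2) * h2 - ((1:ℝ)/2) * h4 + ((1:ℝ)/2) * h5
  have hE2 : (u 0 - p 0) * (c 0 - c' 0) + (u 1 - p 1) * (c 1 - c' 1) = 0 := by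
    linear_combination ((1:ℝ)/2) * h1 - ((1:ℝ)/2) * h3 - ((1:ℝ)/2) * h4 + ((1:ℝ)/2) * h6
  have ha : (c 0 - c' 0) * sideVal p q u = 0 := by
    simp only [sideVal]
    linear_combination (u 1 - p 1) * hE1 - (q 1 - p 1) * hE2
  have hb : (c 1 - c' 1) * sideVal p q u = 0 := by
    simp only [sideVal]
    linear_combination (q 0 - p 0) * hE2 - (u 0 - p 0) * hE1
  have ha' : c 0 = c' 0 := by
    rcases mul_eq_zero.mp ha with h | h
    · linarith
    · exact absurd h hside
  have hb' : c 1 = c' 1 := by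
    rcases mul_eq_zero.mp hb with h | h
    · linarith
    · exact absurd h hside
  have hcc : c = c' := pt_ext ha' hb'
  refine ⟨hcc, ?_⟩
  rw [← hp, ← hp', hcc]

/-- Splitting a finite set by position relative to a circle. -/
lemma card_split (S : Finset Pt) (c : Pt) (ρ : ℝ) :
    (S.filter (onC c ρ)).card + (S.filter (insideC c ρ)).card
      + (S.filter (outsideC c ρ)).card = S.card := by
  have hdisj : Disjoint (S.filter (insideC c ρ)) (S.filter (outsideC c ρ)) := by
    rw [Finset.disjoint_left]
    intro s hs1 hs2
    rw [Finset.mem_filter, insideC] at hs1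
    rw [Finset.mem_filter, outsideC] at hs2
    linarith [hs1.2, hs2.2]
  have hdisj2 : Disjoint (S.filter (onC c ρ))
      (S.filter (insideC c ρ) ∪ S.filter (outsideC c ρ)) := by
    rw [Finset.disjoint_left]
    intro s hs1 hs2
    rw [Finset.mem_filter, onC] at hs1
    rcases Finset.mem_union.mp hs2 with h | h
    · rw [Finset.mem_filter, insideC] at h
      linarith [hs1.2, h.2]
    · rw [Finset.mem_filter, outsideC] at h
      linarith [hs1.2, h.2]
  have hunion : S.filter (onC c ρ) ∪ (S.filter (insideC c ρ) ∪ S.filter (outsideC c ρ)) = S := by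
    ext s
    simp only [Finset.mem_union, Finset.mem_filter]
    constructor
    · rintro (h | h | h) <;> exact h.1
    · intro hs
      rcases lt_trichotomy (dist s c) ρ with h | h | h
      · exact Or.inr (Or.inl ⟨hs, h⟩)
      · exact Or.inl ⟨hs, h⟩
      · exact Or.inr (Or.inr ⟨hs, h⟩)
  conv_rhs => rw [← hunion]
  rw [Finset.card_union_of_disjoint hdisj2, Finset.card_union_of_disjoint hdisj, Nat.add_assoc]

/-- The halving circles of `S`, encoded as the triples of `S` they pass through. -/
def TH (n : ℕ) (S : Finset Pt) : Finset (Finset Pt) :=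
  (S.powersetCard 3).filter (fun T => ∃ c r, (c, r) ∈ halvingSet n S ∧ S.filter (onC c r) = T)

lemma ncard_eq_TH_card (n : ℕ) (S : Finset Pt) (hgen : GenPos S) :
    (halvingSet n S).ncard = (TH n S).card := by
  classical
  set Φ : Pt × ℝ → Finset Pt := fun cr => S.filter (onC cr.1 cr.2) with hΦ
  have hinj : Set.InjOn Φ (halvingSet n S) := by
    rintro ⟨c, r⟩ hcr ⟨c', r'⟩ hcr' heq
    simp only [halvingSet, Set.mem_setOf_eq, IsHalving] at hcr hcr'
    obtain ⟨hr, hc3, _, _⟩ := hcr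
    obtain ⟨hr', hc3', _, _⟩ := hcr'
    simp only [hΦ] at heq
    obtain ⟨a, b, d, hab, had, hbd, hT⟩ := Finset.card_eq_three.mp hc3
    have hmem : ∀ x ∈ ({a, b, d} : Finset Pt), x ∈ S ∧ onC c r x ∧ onC c' r' x := by
      intro x hx
      have hx1 : x ∈ S.filter (onC c r) := by rw [hT]; exact hx
      have hx2 : x ∈ S.filter (onC c' r') := by rw [← heq, hT]; exact hx
      exact ⟨(Finset.mem_filter.mp hx1).1, (Finset.mem_filter.mp hx1).2,
        (Finset.mem_filter.mp hx2).2⟩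
    obtain ⟨haS, hca, hca'⟩ := hmem a (by simp)
    obtain ⟨hbS, hcb, hcb'⟩ := hmem b (by simp)
    obtain ⟨hdS, hcd, hcd'⟩ := hmem d (by simp)
    have hside : sideVal a b d ≠ 0 := by
      intro h
      exact hgen.1 a haS b hbS d hdS hab had hbd ((collinear_iff_sideVal hab).mpr h)
    obtain ⟨h1, h2⟩ := circle_unique hside hr hr' hca hcb hcd hca' hcb' hcd'
    exact Prod.ext h1 h2
  have himg : Φ '' (halvingSet n S) = ↑(TH n S) := by
    ext T
    simp only [Set.mem_image, Finset.mem_coe, TH, Finset.mem_filter, Finset.mem_powersetCard]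
    constructor
    · rintro ⟨⟨c, r⟩, hcr, rfl⟩
      have hcr' : IsHalving n S c r := hcr
      exact ⟨⟨Finset.filter_subset _ _, hcr'.2.1⟩, c, r, hcr, rfl⟩
    · rintro ⟨_, c, r, hcr, hrfl⟩
      exact ⟨(c, r), hcr, hrfl⟩
  calc (halvingSet n S).ncard = (Φ '' (halvingSet n S)).ncard :=
        (Set.ncard_image_of_injOn hinj).symm
    _ = (TH n S).card := by rw [himg, Set.ncard_coe_finset]

/-! ### The per-pair analysis -/

def Rset (S : Finset Pt) (p q : Pt) : Finset Pt := (S.erase p).erase q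

lemma mem_Rset {S : Finset Pt} {p q s : Pt} :
    s ∈ Rset S p q ↔ s ∈ S ∧ s ≠ p ∧ s ≠ q := by
  simp only [Rset, Finset.mem_erase]
  tauto

section Pair

variable {n : ℕ} {S : Finset Pt} {p q : Pt}
  (hgen : GenPos S) (hp : p ∈ S) (hq : q ∈ S) (hpq : p ≠ q)

include hgen hp hq hpq in
lemma alpha_ne : ∀ s ∈ Rset S p q, alphaVal p q s ≠ 0 := by
  intro s hsR h
  obtain ⟨hsS, hsp, hsq⟩ := mem_Rset.mp hsR
  have hside : sideVal p q s = 0 := by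
    rw [alphaVal] at h
    linarith
  exact hgen.1 p hp q hq s hsS hpq (Ne.symm hsp) (Ne.symm hsq)
    ((collinear_iff_sideVal hpq).mpr hside)

include hgen hp hq hpq in
lemma tval_inj : Set.InjOn (tval p q) (Rset S p q) := by
  intro r hrR s hsR hts
  by_contra hne
  have hα := alpha_ne hgen hp hq hpq
  obtain ⟨hrS, hrp, hrq⟩ := mem_Rset.mp (by exact_mod_cast hrR)
  obtain ⟨hsS, hsp, hsq⟩ := mem_Rset.mp (by exact_mod_cast hsR)
  exfalso
  set τ := tval p q r with hτ
  have hcon : Concyclic4 p q r s := by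
    refine ⟨cen p q τ, radp p q τ, radp_pos hpq τ, onC_cen_p hpq τ, onC_cen_q hpq τ, ?_, ?_⟩
    · exact (onC_cen_iff_tval hpq (hα r (by exact_mod_cast hrR)) τ).mpr rfl
    · exact (onC_cen_iff_tval hpq (hα s (by exact_mod_cast hsR)) τ).mpr hts
  exact hgen.2 p hp q hq r hrS s hsS hpq (Ne.symm hrp) (Ne.symm hsp) (Ne.symm hrq)
    (Ne.symm hsq) hne hcon

include hgen hp hq hpq in
lemma filter_on {r : Pt} (hrR : r ∈ Rset S p q) :
    S.filter (onC (cen p q (tval p q r)) (radp p q (tval p q r))) = {p, q, r} := by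
  have hα := alpha_ne hgen hp hq hpq
  obtain ⟨hrS, hrp, hrq⟩ := mem_Rset.mp hrR
  set τ := tval p q r with hτ
  ext s
  simp only [Finset.mem_filter, Finset.mem_insert, Finset.mem_singleton]
  constructor
  · rintro ⟨hsS, hon⟩
    by_cases hsp : s = p
    · exact Or.inl hsp
    by_cases hsq : s = q
    · exact Or.inr (Or.inl hsq)
    have hsR : s ∈ Rset S p q := mem_Rset.mpr ⟨hsS, hsp, hsq⟩
    have : τ = tval p q s := (onC_cen_iff_tval hpq (hα s hsR) τ).mp hon
    exact Or.inr (Or.inr (tval_inj hgen hp hq hpq hsR hrR this.symm))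
  · rintro (rfl | rfl | rfl)
    · exact ⟨hp, onC_cen_p hpq τ⟩
    · exact ⟨hq, onC_cen_q hpq τ⟩
    · exact ⟨hrS, (onC_cen_iff_tval hpq (hα s hrR) τ).mpr rfl⟩

lemma alphaVal_p : alphaVal p q p = 0 := by
  simp only [alphaVal, sideVal]
  ring

lemma alphaVal_q : alphaVal p q q = 0 := by
  simp only [alphaVal, sideVal]
  ring

lemma Aval_p : Aval p q p = 0 := by
  simp only [Aval, sub_self]

lemma Aval_q : Aval p q q = 0 := by
  simp only [Aval, dsq_cen_q, sub_self]

include hgen hp hq hpq in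
lemma filter_in {r : Pt} (hrR : r ∈ Rset S p q) :
    (S.filter (insideC (cen p q (tval p q r)) (radp p q (tval p q r)))).card
      = cnt (Rset S p q) (tval p q) (fun s => 0 < alphaVal p q s) r := by
  have hα := alpha_ne hgen hp hq hpq
  set τ := tval p q r with hτ
  unfold cnt
  congr 1
  ext s
  simp only [Finset.mem_filter]
  constructor
  · rintro ⟨hsS, hin⟩
    by_cases hsp : s = p
    · exfalso
      subst hsp
      rw [insideC_cen_iff hpq, Aval_p, alphaVal_p] at hin
      simp at hin
    by_cases hsq : s = q
    · exfalso
      subst hsq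
      rw [insideC_cen_iff hpq, Aval_q, alphaVal_q] at hin
      simp at hin
    have hsR : s ∈ Rset S p q := mem_Rset.mpr ⟨hsS, hsp, hsq⟩
    exact ⟨hsR, (insideC_cen_iff_tval hpq (hα s hsR) τ).mp hin⟩
  · rintro ⟨hsR, hcond⟩
    exact ⟨(mem_Rset.mp hsR).1, (insideC_cen_iff_tval hpq (hα s hsR) τ).mpr hcond⟩

include hgen hp hq hpq in
lemma pair_odd (hn : 1 ≤ n) (hcard : S.card = 2 * n + 1) :
    ((TH n S).filter (fun T => p ∈ T ∧ q ∈ T)).card % 2 = 1 := by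
  have hα := alpha_ne hgen hp hq hpq
  set R := Rset S p q with hR
  set t := tval p q with ht
  set pos := fun s => 0 < alphaVal p q s with hpos
  have hRcard : R.card = 2 * n - 1 := by
    have h1 : (S.erase p).card = S.card - 1 := Finset.card_erase_of_mem hp
    have h2 : ((S.erase p).erase q).card = (S.erase p).card - 1 :=
      Finset.card_erase_of_mem (Finset.mem_erase.mpr ⟨Ne.symm hpq, hq⟩)
    rw [hR, Rset, h2, h1, hcard]
    omega
  have hbij : (R.filter (fun r => cnt R t pos r = n - 1)).card
      = ((TH n S).filter (fun T => p ∈ T ∧ q ∈ T)).card := by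
    apply Finset.card_bij (fun r _ => insert p (insert q ({r} : Finset Pt)))
    · -- maps into the target
      intro r hr
      obtain ⟨hrR, hcnt⟩ := Finset.mem_filter.mp hr
      obtain ⟨hrS, hrp, hrq⟩ := mem_Rset.mp hrR
      have hT3 : (insert p (insert q ({r} : Finset Pt))).card = 3 := by
        rw [Finset.card_insert_of_notMem, Finset.card_insert_of_notMem]
        · rfl
        · simp [Ne.symm hrq]
        · simp [hpq, Ne.symm hrp]
      have hhalv : IsHalving n S (cen p q (t r)) (radp p q (t r)) := by
        have hon := filter_on hgen hp hq hpq hrR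
        have hin := filter_in hgen hp hq hpq hrR
        refine ⟨radp_pos hpq (t r), ?_, ?_, ?_⟩
        · rw [hon]
          exact hT3
        · rw [hin]
          exact hcnt
        · have hsplit := card_split S (cen p q (t r)) (radp p q (t r))
          rw [hon, hT3, hin, hcnt, hcard] at hsplit
          omega
      refine Finset.mem_filter.mpr ⟨?_, by simp, by simp⟩
      refine Finset.mem_filter.mpr ⟨?_, cen p q (t r), radp p q (t r), hhalv, ?_⟩
      · refine Finset.mem_powersetCard.mpr ⟨?_, hT3⟩
        intro x hx
        simp only [Finset.mem_insert, Finset.mem_singleton] at hx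
        rcases hx with rfl | rfl | rfl
        · exact hp
        · exact hq
        · exact hrS
      · exact filter_on hgen hp hq hpq hrR
    · -- injective
      intro r1 hr1 r2 hr2 heq
      obtain ⟨hr1R, _⟩ := Finset.mem_filter.mp hr1
      obtain ⟨hr1S, hr1p, hr1q⟩ := mem_Rset.mp hr1R
      have : r1 ∈ insert p (insert q ({r2} : Finset Pt)) := by
        rw [← heq]
        simp
      simp only [Finset.mem_insert, Finset.mem_singleton] at this
      rcases this with h | h | h
      · exact absurd h hr1p
      · exact absurd h hr1q
      · exact h
    · -- surjective
      intro T hT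
      obtain ⟨hTH, hpT, hqT⟩ := Finset.mem_filter.mp hT
      obtain ⟨hTP, c, ρ, hcr, hfil⟩ := Finset.mem_filter.mp hTH
      obtain ⟨hTS, hT3⟩ := Finset.mem_powersetCard.mp hTP
      have hcr' : IsHalving n S c ρ := hcr
      -- extract the third point
      have hqT' : q ∈ T.erase p := Finset.mem_erase.mpr ⟨Ne.symm hpq, hqT⟩
      have hc1 : ((T.erase p).erase q).card = 1 := by
        rw [Finset.card_erase_of_mem hqT', Finset.card_erase_of_mem hpT, hT3]
      obtain ⟨r, hrsing⟩ := Finset.card_eq_one.mp hc1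
      have hrmem : r ∈ (T.erase p).erase q := by rw [hrsing]; simp
      have hrq : r ≠ q := (Finset.mem_erase.mp hrmem).1
      have hrp : r ≠ p := (Finset.mem_erase.mp (Finset.mem_of_mem_erase hrmem)).1
      have hrT : r ∈ T := Finset.mem_of_mem_erase (Finset.mem_of_mem_erase hrmem)
      have hrS : r ∈ S := hTS hrT
      have hrR : r ∈ R := mem_Rset.mpr ⟨hrS, hrp, hrq⟩
      have hTeq : T = insert p (insert q ({r} : Finset Pt)) := by
        rw [← hrsing, Finset.insert_erase hqT', Finset.insert_erase hpT]
      -- identify the circle with the pencil element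
      have honp : onC c ρ p := by
        have : p ∈ S.filter (onC c ρ) := by rw [hfil]; exact hpT
        exact (Finset.mem_filter.mp this).2
      have honq : onC c ρ q := by
        have : q ∈ S.filter (onC c ρ) := by rw [hfil]; exact hqT
        exact (Finset.mem_filter.mp this).2
      have honr : onC c ρ r := by
        have : r ∈ S.filter (onC c ρ) := by rw [hfil]; exact hrT
        exact (Finset.mem_filter.mp this).2
      obtain ⟨τ, rfl, rfl⟩ := circle_mem_pencil hpq hcr'.1 honp honq
      have hτr : τ = t r := (onC_cen_iff_tval hpq (hα r hrR) τ).mp honr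
      subst hτr
      have hcnt : cnt R t pos r = n - 1 := by
        rw [← filter_in hgen hp hq hpq hrR]
        exact hcr'.2.2.1
      exact ⟨r, Finset.mem_filter.mpr ⟨hrR, hcnt⟩, hTeq.symm⟩
  rw [← hbij]
  exact odd_cnt R t (tval_inj hgen hp hq hpq) pos n hn hRcard

end Pair


/-- The number of halving circles of `S` is congruent to `n` modulo 2. -/
theorem halving_circles_parity (n : ℕ) (hn : 1 ≤ n) (S : Finset Pt)
    (hcard : S.card = 2 * n + 1) (hgen : GenPos S) :
    (halvingSet n S).ncard % 2 = n % 2 := by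
  rw [ncard_eq_TH_card n S hgen]
  have hsum : ∑ P ∈ S.powersetCard 2, ((TH n S).filter (fun T => P ⊆ T)).card
      = 3 * (TH n S).card := by
    calc ∑ P ∈ S.powersetCard 2, ((TH n S).filter (fun T => P ⊆ T)).card
        = ∑ P ∈ S.powersetCard 2, ∑ T ∈ TH n S, if P ⊆ T then 1 else 0 := by
          refine Finset.sum_congr rfl fun P _ => ?_
          rw [Finset.card_filter]
      _ = ∑ T ∈ TH n S, ∑ P ∈ S.powersetCard 2, if P ⊆ T then 1 else 0 := Finset.sum_comm
      _ = ∑ T ∈ TH n S, 3 := by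
          refine Finset.sum_congr rfl fun T hT => ?_
          rw [← Finset.card_filter]
          obtain ⟨hTS, hT3⟩ := Finset.mem_powersetCard.mp (Finset.mem_filter.mp hT).1
          have hfe : (S.powersetCard 2).filter (fun P => P ⊆ T) = T.powersetCard 2 := by
            ext P
            simp only [Finset.mem_filter, Finset.mem_powersetCard]
            constructor
            · rintro ⟨⟨_, hP2⟩, hPT⟩
              exact ⟨hPT, hP2⟩
            · rintro ⟨hPT, hP2⟩
              exact ⟨⟨hPT.trans hTS, hP2⟩, hPT⟩
          rw [hfe, Finset.card_powersetCard, hT3]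
          decide
      _ = 3 * (TH n S).card := by
          rw [Finset.sum_const, smul_eq_mul, mul_comm]
  have hodd : ∀ P ∈ S.powersetCard 2, ((TH n S).filter (fun T => P ⊆ T)).card % 2 = 1 := by
    intro P hP
    obtain ⟨hPS, hP2⟩ := Finset.mem_powersetCard.mp hP
    obtain ⟨p, q, hpq, rfl⟩ := Finset.card_eq_two.mp hP2
    have hp : p ∈ S := hPS (by simp)
    have hq : q ∈ S := hPS (by simp)
    have hfe : (TH n S).filter (fun T => ({p, q} : Finset Pt) ⊆ T)
        = (TH n S).filter (fun T => p ∈ T ∧ q ∈ T) := by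
      apply Finset.filter_congr
      intro T _
      simp [Finset.insert_subset_iff]
    rw [hfe]
    exact pair_odd hgen hp hq hpq hn hcard
  have hsum_mod : (∑ P ∈ S.powersetCard 2, ((TH n S).filter (fun T => P ⊆ T)).card) % 2
      = (S.powersetCard 2).card % 2 := by
    rw [Finset.sum_nat_mod]
    rw [Finset.sum_congr rfl hodd, Finset.sum_const, smul_eq_mul, mul_one]
  have hP2card : (S.powersetCard 2).card = (2 * n + 1) * n := by
    rw [Finset.card_powersetCard, hcard, Nat.choose_two_right]
    have h1 : 2 * n + 1 - 1 = 2 * n := by omega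
    have h2 : (2 * n + 1) * (2 * n) = ((2 * n + 1) * n) * 2 := by ring
    rw [h1, h2, Nat.mul_div_cancel _ (by norm_num : 0 < 2)]
  have hparity : ((2 * n + 1) * n) % 2 = n % 2 := by
    rw [Nat.mul_mod]
    have h1 : (2 * n + 1) % 2 = 1 := by omega
    rw [h1, one_mul, Nat.mod_mod_of_dvd _ (dvd_refl 2)]
  omega
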